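/- Let n ≥ 2 and let M be a Coxeter matrix on Fin n whose Coxeter group W has abelianization isomorphic to Z/2Z. Then there exist, for each k ∈ Fin (n−1), distinct vertices i_k, j_k ∈ Fin n and a word w_k in the free group on Fin n, such that the graph on Fin n whose edge set is {{i_k, j_k} : k ∈ Fin (n−1)} is connected (hence a tree), and the group presented by generators Fin n and the n−1 relators x_{i_k} · w_k · x_{j_k}⁻¹ · w_k⁻¹ admits a surjective group homomorphism onto W. -/

import Mathlib

/-!
A homomorphism `W → ℤ/2` is the same as a function on the generators that is constant across every
edge with odd label `m_ab`, so `W_ab ≅ ℤ/2` forces the graph of odd edges to be connected. Pick a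
spanning tree of it. For a tree edge `{a, b}` with `m_ab = 2q + 1` the involutions `s_a, s_b` are
conjugate by `(s_b s_a)^q`, so the LOT relator `x_a w x_b⁻¹ w⁻¹` with `w = (x_b x_a)^q` holds in `W`,
and `x_a ↦ s_a` is a surjection from the LOT group onto `W`.
-/

open SimpleGraph

theorem semiconjBy_mul_pow_of_mul_pow_odd_eq_one {G : Type*} [Group G] {g h : G} (q : ℕ)
    (hg : g * g = 1) (hh : h * h = 1) (hgh : (g * h) ^ (2 * q + 1) = 1) :
    SemiconjBy ((h * g) ^ q) h g := by
  have hcycle : (g * h) ^ q * g * (h * (g * h) ^ q) = 1 := by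
    rw [← hgh, show 2 * q + 1 = q + 1 + q by ring, pow_add, pow_succ]
    simp only [mul_assoc]
  have hswap : (g * h) ^ q * g = (h * g) ^ q * h := by
    rw [mul_eq_one_iff_eq_inv.mp hcycle, mul_inv_rev, ← inv_pow, mul_inv_rev,
      inv_eq_of_mul_eq_one_left hg, inv_eq_of_mul_eq_one_left hh]
  have hg_conj : SemiconjBy g (h * g) (g * h) := (mul_assoc g h g).symm
  exact hswap.symm.trans (hg_conj.pow_right q).eq.symm

theorem PresentedGroup.toGroup_surjective {α G : Type*} [Group G] {f : α → G}
    {rels : Set (FreeGroup α)} (hf : Subgroup.closure (Set.range f) = ⊤)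
    (h : ∀ r ∈ rels, FreeGroup.lift f r = 1) : Function.Surjective (toGroup h) := by
  rw [← MonoidHom.range_eq_top, eq_top_iff, ← hf, Subgroup.closure_le]
  rintro _ ⟨a, rfl⟩
  exact ⟨of a, toGroup.of h⟩

theorem SimpleGraph.Connected.exists_fin_edges_connected {V : Type*} [Fintype V]
    {G : SimpleGraph V} (hG : G.Connected) :
    ∃ i j : Fin (Fintype.card V - 1) → V, (∀ k, G.Adj (i k) (j k)) ∧
      (fromEdgeSet (Set.range fun k => s(i k, j k))).Connected := by
  classical
  obtain ⟨T, hTG, hT⟩ := hG.exists_isTree_le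
  let e : Fin (Fintype.card V - 1) ≃ T.edgeFinset :=
    (Fintype.equivFinOfCardEq (by rw [Fintype.card_coe, ← hT.card_edgeFinset]; rfl)).symm
  have hedge : ∀ k, s((e k).1.out.1, (e k).1.out.2) = (e k).1 := fun k => Quot.out_eq _
  refine ⟨fun k => (e k).1.out.1, fun k => (e k).1.out.2, fun k => hTG ?_, ?_⟩
  · rw [← mem_edgeSet, hedge, ← mem_edgeFinset]
    exact (e k).2
  · have hrange : (Set.range fun k => s((e k).1.out.1, (e k).1.out.2)) = T.edgeSet := by
      ext z
      simp only [hedge, Set.mem_range]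
      refine ⟨?_, fun hz => ⟨e.symm ⟨z, mem_edgeFinset.mpr hz⟩, by simp⟩⟩
      rintro ⟨k, rfl⟩
      exact mem_edgeFinset.mp (e k).2
    rw [hrange, fromEdgeSet_edgeSet]
    exact hT.connected

namespace CoxeterMatrix

variable {B : Type*} (M : CoxeterMatrix B)

def oddGraph : SimpleGraph B where
  Adj a b := a ≠ b ∧ Odd (M a b)
  symm := ⟨fun a b hab => ⟨hab.1.symm, M.symmetric a b ▸ hab.2⟩⟩
  loopless := ⟨fun _ ha => ha.1 rfl⟩

theorem reachable_of_abelianization_of_simple_eq {a b : B}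
    (hab : Abelianization.of (M.simple a) = Abelianization.of (M.simple b)) :
    M.oddGraph.Reachable a b := by
  classical
  have hsq : ∀ x : Multiplicative (ZMod 2), x * x = 1 := by decide
  let f : B → Multiplicative (ZMod 2) :=
    fun c => if M.oddGraph.Reachable a c then 1 else Multiplicative.ofAdd 1
  have hf : M.IsLiftable f := by
    intro c d
    rcases Nat.even_or_odd (M c d) with ⟨t, ht⟩ | hodd
    · rw [ht, pow_add, ← mul_pow, hsq, one_pow]
    · suffices f c = f d by rw [this, hsq, one_pow]
      by_cases hcd : c = d
      · rw [hcd]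
      · have hadj : M.oddGraph.Adj c d := ⟨hcd, hodd⟩
        have hiff : M.oddGraph.Reachable a c ↔ M.oddGraph.Reachable a d :=
          ⟨fun r => r.trans hadj.reachable, fun r => r.trans hadj.symm.reachable⟩
        simp only [f, hiff]
  have hψ := congrArg (Abelianization.lift (M.toCoxeterSystem.lift ⟨f, hf⟩)) hab
  simp only [Abelianization.lift_apply_of] at hψ
  rw [← M.toCoxeterSystem_simple, M.toCoxeterSystem.lift_apply_simple,
    M.toCoxeterSystem.lift_apply_simple] at hψ
  by_contra hnr
  simp only [f, if_pos (Reachable.refl a), if_neg hnr] at hψ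
  exact absurd hψ (by decide)

theorem abelianization_of_simple_ne_one (a : B) : Abelianization.of (M.simple a) ≠ 1 := by
  intro h1
  have := congrArg (Abelianization.lift M.toCoxeterSystem.lengthParity) h1
  rw [Abelianization.lift_apply_of, map_one] at this
  exact absurd (M.toCoxeterSystem.lengthParity_simple a ▸ this) (by decide)

theorem oddGraph_preconnected_of_abelianization_equiv
    (e : Abelianization M.Group ≃* Multiplicative (ZMod 2)) : M.oddGraph.Preconnected := by
  have hZ2 : ∀ x y : Multiplicative (ZMod 2), x ≠ 1 → y ≠ 1 → x = y := by decide
  refine fun a b => M.reachable_of_abelianization_of_simple_eq (e.injective (hZ2 _ _ ?_ ?_)) <;>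
    exact e.map_ne_one_iff.mpr (M.abelianization_of_simple_ne_one _)

theorem lift_conj_relator_eq_one {a b : B} (hab : Odd (M a b)) :
    FreeGroup.lift M.simple (FreeGroup.of a * (FreeGroup.of b * FreeGroup.of a) ^ (M a b / 2) *
      (FreeGroup.of b)⁻¹ * ((FreeGroup.of b * FreeGroup.of a) ^ (M a b / 2))⁻¹) = 1 := by
  have hsq := M.toCoxeterSystem.simple_mul_simple_self
  have hconj := semiconjBy_mul_pow_of_mul_pow_odd_eq_one (M a b / 2) (hsq a) (hsq b)
    (by rw [Nat.two_mul_div_two_add_one_of_odd hab]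
        exact M.toCoxeterSystem.simple_mul_simple_pow a b)
  simp only [map_mul, map_inv, map_pow, FreeGroup.lift_apply_of, ← M.toCoxeterSystem_simple]
  rw [← hconj.eq]
  group

end CoxeterMatrix

/-- If `M` is a Coxeter matrix on `Fin n` (`n ≥ 2`) whose Coxeter group `W`
has abelianization isomorphic to `ℤ/2`, then there is a labeled oriented tree presentation on
`Fin n` (relators `x_{i_k} · w_k · x_{j_k}⁻¹ · w_k⁻¹`, the pairs `{i_k, j_k}` forming a
connected graph, hence a tree, on `Fin n`) whose group surjects onto `W`. -/
theorem stmt_4 (n : ℕ) (hn : 2 ≤ n) (M : CoxeterMatrix (Fin n))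
    (h : Nonempty (Abelianization M.Group ≃* Multiplicative (ZMod 2))) :
    ∃ (i j : Fin (n - 1) → Fin n) (w : Fin (n - 1) → FreeGroup (Fin n)),
      (∀ k, i k ≠ j k) ∧
      (SimpleGraph.fromEdgeSet (Set.range fun k => s(i k, j k))).Connected ∧
      ∃ φ : PresentedGroup
          (Set.range fun k => FreeGroup.of (i k) * w k * (FreeGroup.of (j k))⁻¹ * (w k)⁻¹)
          →* M.Group,
        Function.Surjective φ := by
  obtain ⟨e⟩ := h
  have : Nonempty (Fin n) := ⟨⟨0, by omega⟩⟩
  have hodd : M.oddGraph.Connected := ⟨M.oddGraph_preconnected_of_abelianization_equiv e⟩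
  have htree := hodd.exists_fin_edges_connected
  rw [Fintype.card_fin] at htree
  obtain ⟨i, j, hadj, htree⟩ := htree
  refine ⟨i, j, fun k => (FreeGroup.of (j k) * FreeGroup.of (i k)) ^ (M (i k) (j k) / 2),
    fun k => (hadj k).1, htree, _,
    PresentedGroup.toGroup_surjective M.toCoxeterSystem.subgroup_closure_range_simple ?_⟩
  rintro _ ⟨k, rfl⟩
  exact M.lift_conj_relator_eq_one (hadj k).2
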